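/- arXiv:2011.12099 — 2 statements merged into one kernel-verified Lean document; each statement's English description precedes it below -/
import Mathlib

section
/- Let E, Q, J, R be real n×n matrices with Eᵀ = E, Qᵀ = Q, Jᵀ = −J, and Rᵀ = R, and let G, P be real n×m matrices. Let s be a real scalar such that the matrix (s·E − (J − R)Q) is invertible. Then the matrix (s·E − Q(−J − R)) is also invertible, and the transpose of the primal transfer function value equals the dual transfer function value: ((G + P)ᵀ Q (s·E − (J − R)Q)^{-1} (G − P))ᵀ = (G − P)ᵀ (s·E − Q(−J − R))^{-1} Q (G + P). -/
open Matrix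

/-- For a port-Hamiltonian system with symmetric `E`, `Q`, `R`, skew-symmetric `J`,
and port matrices `G`, `P`: if `s·E − (J − R)Q` is invertible then so is
`s·E − Q(−J − R)`, and the transpose of the primal transfer function value equals the
dual transfer function value. -/
theorem ph_dual_transfer_function (n m : ℕ)
    (E Q J R : Matrix (Fin n) (Fin n) ℝ) (G P : Matrix (Fin n) (Fin m) ℝ)
    (hE : Eᵀ = E) (hQ : Qᵀ = Q) (hJ : Jᵀ = -J) (hR : Rᵀ = R)
    (s : ℝ) (hinv : IsUnit (s • E - (J - R) * Q)) :
    IsUnit (s • E - Q * (-J - R)) ∧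
    ((G + P)ᵀ * Q * (s • E - (J - R) * Q)⁻¹ * (G - P))ᵀ
      = (G - P)ᵀ * (s • E - Q * (-J - R))⁻¹ * (Q * (G + P)) := by
  have key : s • E - Q * (-J - R) = (s • E - (J - R) * Q)ᵀ := by
    rw [transpose_sub, transpose_smul, hE, transpose_mul, hQ, transpose_sub, hJ, hR]
  have hinv' : IsUnit (s • E - Q * (-J - R)) := by
    rw [key]
    exact (Matrix.isUnit_transpose _).mpr hinv
  refine ⟨hinv', ?_⟩
  rw [key, ← transpose_nonsing_inv]
  simp [transpose_mul, hQ, Matrix.mul_assoc]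
end

section
/- Let 𝒜_{0,R} and 𝒜_{0,L} be real N_p×N_q matrices and set 𝒜₀ = 𝒜_{0,R} + 𝒜_{0,L}. Let B_d be a real N_p×N_d matrix, let D_p be an invertible real N_q×N_q matrix, and let d₀ be a real scalar. Let v ∈ ℝ^{N_p}, q^R, q^L ∈ ℝ^{N_q}, and d ∈ ℝ^{N_d} be vectors satisfying d₀ · 𝒜_{0,R}ᵀ v = D_p (q^R − q^L) and 𝒜_{0,R} q^R + 𝒜_{0,L} q^L = B_d d. Then (𝒜_{0,R} D_p^{-1} (d₀ · 𝒜_{0,R}ᵀ)) v = −𝒜₀ q^L + B_d d. -/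
open Matrix

/-- Index reduction of the endpoint discretization: from the discretized continuity
equation `d₀ 𝒜₀ᵣᵀ v = D_p (q^R − q^L)` and the Kirchhoff constraint
`𝒜₀ᵣ q^R + 𝒜₀ₗ q^L = B_d d`, one derives
`(𝒜₀ᵣ D_p⁻¹ (d₀ 𝒜₀ᵣᵀ)) v = −𝒜₀ q^L + B_d d` with `𝒜₀ = 𝒜₀ᵣ + 𝒜₀ₗ`. -/
theorem endpoint_index_reduction (Np Nq Nd : ℕ)
    (A0R A0L : Matrix (Fin Np) (Fin Nq) ℝ)
    (Bd : Matrix (Fin Np) (Fin Nd) ℝ)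
    (Dp : Matrix (Fin Nq) (Fin Nq) ℝ) (hDp : IsUnit Dp)
    (d₀ : ℝ)
    (v : Fin Np → ℝ) (qR qL : Fin Nq → ℝ) (d : Fin Nd → ℝ)
    (h1 : d₀ • (A0Rᵀ *ᵥ v) = Dp *ᵥ (qR - qL))
    (h2 : A0R *ᵥ qR + A0L *ᵥ qL = Bd *ᵥ d) :
    (A0R * Dp⁻¹ * (d₀ • A0Rᵀ)) *ᵥ v = -((A0R + A0L) *ᵥ qL) + Bd *ᵥ d := by
  have hinv : Dp⁻¹ * Dp = 1 := nonsing_inv_mul Dp (isUnit_iff_isUnit_det Dp |>.mp hDp)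
  have key : (A0R * Dp⁻¹ * (d₀ • A0Rᵀ)) *ᵥ v = A0R *ᵥ (qR - qL) := by
    rw [← mulVec_mulVec, ← mulVec_mulVec, smul_mulVec, h1, mulVec_mulVec, mulVec_mulVec, Matrix.mul_assoc, hinv, Matrix.mul_one]
  rw [key, ← h2]
  simp [Matrix.add_mulVec, Matrix.mulVec_sub]
  abel
end
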